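/- Let Ω ⊆ 𝔽ⁿ be a finitely generated P-closed set and let G ⊆ Ω. Then Ω = Ḡ if and only if the left 𝔽-vector spaces Im(E_Ω) and Im(E_G) have the same (finite) dimension, where E_Ω : R → 𝔽^Ω and E_G : R → 𝔽^G are the evaluation maps. -/

import Mathlib

/- Common setup: free multivariate skew polynomial rings over a division ring. -/

open Matrix Finsupp

/-- The underlying left `𝔽`-module of the free multivariate skew polynomial ring:
the free left `𝔽`-module with basis the free monoid on `n` symbols. -/
abbrev SkewPoly (𝔽 : Type*) [DivisionRing 𝔽] (n : ℕ) : Type _ := FreeMonoid (Fin n) →₀ 𝔽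

namespace SkewPoly

variable {𝔽 : Type*} [DivisionRing 𝔽] {n : ℕ}

/-- The variable `xᵢ` as a skew polynomial. -/
noncomputable def X (𝔽 : Type*) [DivisionRing 𝔽] {n : ℕ} (i : Fin n) : SkewPoly 𝔽 n :=
  Finsupp.single (FreeMonoid.of i) 1

/-- The constant `a` as a skew polynomial (coefficient on the empty word). -/
noncomputable def C {𝔽 : Type*} [DivisionRing 𝔽] (n : ℕ) (a : 𝔽) :
    SkewPoly 𝔽 n := Finsupp.single 1 a

/-- The degree of a skew polynomial: the maximal length of a word in its support
(`⊥` for the zero polynomial). -/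
noncomputable def deg (F : SkewPoly 𝔽 n) : WithBot ℕ :=
  F.support.sup fun m => ((FreeMonoid.length m : ℕ) : WithBot ℕ)

/-- A matrix morphism `σ : 𝔽 → Mₙ(𝔽)`: a unital ring homomorphism. -/
def IsMatrixMorphism (σ : 𝔽 → Matrix (Fin n) (Fin n) 𝔽) : Prop :=
  σ 1 = 1 ∧ (∀ a b : 𝔽, σ (a + b) = σ a + σ b) ∧ (∀ a b : 𝔽, σ (a * b) = σ a * σ b)

/-- A `σ`-vector derivation `δ : 𝔽 → 𝔽ⁿ`: additive with `δ(ab) = σ(a)δ(b) + δ(a)b`. -/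
def IsVectorDerivation (σ : 𝔽 → Matrix (Fin n) (Fin n) 𝔽) (δ : 𝔽 → Fin n → 𝔽) : Prop :=
  (∀ a b : 𝔽, δ (a + b) = δ a + δ b) ∧
    (∀ a b : 𝔽, δ (a * b) = σ a *ᵥ δ b + fun i => δ a i * b)

/-- A multiplication on the free module `SkewPoly 𝔽 n` making it a ring (with the
existing addition) whose identity is the empty word, which restricts to concatenation
on monomials, is additive on degrees of nonzero elements, and for which left
multiplication by constants is scalar multiplication. -/
structure RawMul (𝔽 : Type*) [DivisionRing 𝔽] (n : ℕ) where
  /-- the multiplication -/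
  mul : SkewPoly 𝔽 n → SkewPoly 𝔽 n → SkewPoly 𝔽 n
  mul_add : ∀ F G H : SkewPoly 𝔽 n, mul F (G + H) = mul F G + mul F H
  add_mul : ∀ F G H : SkewPoly 𝔽 n, mul (F + G) H = mul F H + mul G H
  mul_assoc : ∀ F G H : SkewPoly 𝔽 n, mul (mul F G) H = mul F (mul G H)
  one_mul : ∀ F : SkewPoly 𝔽 n, mul (C n 1) F = F
  mul_one : ∀ F : SkewPoly 𝔽 n, mul F (C n 1) = F
  mono_mul_mono : ∀ m m' : FreeMonoid (Fin n),
    mul (Finsupp.single m 1) (Finsupp.single m' 1) = Finsupp.single (m * m') 1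
  const_mul : ∀ (a : 𝔽) (F : SkewPoly 𝔽 n), mul (C n a) F = a • F
  deg_mul : ∀ F G : SkewPoly 𝔽 n, F ≠ 0 → G ≠ 0 → deg (mul F G) = deg F + deg G

/-- The multiplication `S` satisfies the commutation rule
`xᵢ a = Σⱼ σ_{i,j}(a) xⱼ + δᵢ(a)`. -/
def HasCommRule (S : RawMul 𝔽 n) (σ : 𝔽 → Matrix (Fin n) (Fin n) 𝔽)
    (δ : 𝔽 → Fin n → 𝔽) : Prop :=
  ∀ (i : Fin n) (a : 𝔽),
    S.mul (X 𝔽 i) (C n a) =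
      (∑ j : Fin n, Finsupp.single (FreeMonoid.of j) (σ a i j)) + C n (δ a i)

/-- `F = Σᵢ Gᵢ (xᵢ - aᵢ) + b`, i.e. `b` is a remainder of `F` upon right division
by `x₁ - a₁, …, xₙ - aₙ`; equivalently `F - b` lies in the left ideal generated by
the `xᵢ - aᵢ`. -/
def Decomposes (S : RawMul 𝔽 n) (a : Fin n → 𝔽) (F : SkewPoly 𝔽 n) (b : 𝔽) : Prop :=
  ∃ G : Fin n → SkewPoly 𝔽 n,
    F = (∑ i : Fin n, S.mul (G i) (X 𝔽 i - C n (a i))) + C n b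

/-- The evaluation of `F` at the point `a`: the unique `b ∈ 𝔽` such that `F - b`
lies in the left ideal generated by `x₁ - a₁, …, xₙ - aₙ`. -/
noncomputable def eval (S : RawMul 𝔽 n) (a : Fin n → 𝔽) (F : SkewPoly 𝔽 n) : 𝔽 :=
  letI := Classical.propDecidable (∃ b : 𝔽, Decomposes S a F b)
  if h : ∃ b : 𝔽, Decomposes S a F b then h.choose else 0

/-- The `(σ,δ)`-conjugate `a^c = σ(c) a c⁻¹ + δ(c) c⁻¹` of `a` with respect to `c`. -/
noncomputable def conj (σ : 𝔽 → Matrix (Fin n) (Fin n) 𝔽) (δ : 𝔽 → Fin n → 𝔽)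
    (a : Fin n → 𝔽) (c : 𝔽) : Fin n → 𝔽 :=
  fun i => (σ c *ᵥ a) i * c⁻¹ + δ c i * c⁻¹

/-- `I(Ω)`: the set of skew polynomials vanishing at every point of `Ω`. -/
def zeroIdeal (S : RawMul 𝔽 n) (Ω : Set (Fin n → 𝔽)) : Set (SkewPoly 𝔽 n) :=
  {F | ∀ a ∈ Ω, eval S a F = 0}

/-- The left ideal of `SkewPoly 𝔽 n` generated by `x₁ - a₁, …, xₙ - aₙ`
(the set of sums of left multiples of the generators). -/
def pointIdeal (S : RawMul 𝔽 n) (a : Fin n → 𝔽) : Set (SkewPoly 𝔽 n) :=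
  {F | ∃ G : Fin n → SkewPoly 𝔽 n, F = ∑ i : Fin n, S.mul (G i) (X 𝔽 i - C n (a i))}

/-- The P-closure `Ω̄ = Z(I(Ω))` of a set of points `Ω`. -/
def pClosure (S : RawMul 𝔽 n) (Ω : Set (Fin n → 𝔽)) : Set (Fin n → 𝔽) :=
  {a | ∀ F ∈ zeroIdeal S Ω, eval S a F = 0}

/-- `Ω` is P-closed if it equals its P-closure. -/
def IsPClosed (S : RawMul 𝔽 n) (Ω : Set (Fin n → 𝔽)) : Prop := pClosure S Ω = Ω

/-- `B` is P-independent: no point of `B` lies in the P-closure of the rest. -/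
def PIndep (S : RawMul 𝔽 n) (B : Set (Fin n → 𝔽)) : Prop :=
  ∀ a ∈ B, a ∉ pClosure S (B \ {a})

/-- `B` is a P-basis of `Ω`: a P-independent subset of `Ω` whose P-closure is `Ω`. -/
def IsPBasis (S : RawMul 𝔽 n) (B Ω : Set (Fin n → 𝔽)) : Prop :=
  B ⊆ Ω ∧ PIndep S B ∧ pClosure S B = Ω

/-- `Ω` is finitely generated: it is the P-closure of a finite subset of itself. -/
def FinGen (S : RawMul 𝔽 n) (Ω : Set (Fin n → 𝔽)) : Prop :=
  ∃ G : Set (Fin n → 𝔽), G.Finite ∧ G ⊆ Ω ∧ pClosure S G = Ω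

/-- The rank of a P-closed set: the (common) cardinality of its P-bases. -/
noncomputable def pRank (S : RawMul 𝔽 n) (Ω : Set (Fin n → 𝔽)) : ℕ :=
  sInf {k : ℕ | ∃ B : Finset (Fin n → 𝔽), IsPBasis S ↑B Ω ∧ B.card = k}

/-- The image of the evaluation map `E_Ω : R → 𝔽^Ω`, as a left `𝔽`-subspace of `𝔽^Ω`
(the span of the image; the image is itself a subspace since evaluation is left linear). -/
noncomputable def evalSpan (S : RawMul 𝔽 n) (Ω : Set (Fin n → 𝔽)) :
    Submodule 𝔽 (↥Ω → 𝔽) :=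
  Submodule.span 𝔽 (Set.range fun F : SkewPoly 𝔽 n => fun a : ↥Ω => eval S ↑a F)

/-- `I` is a two-sided ideal with respect to the multiplication `S`. -/
def IsTwoSidedIdealSet (S : RawMul 𝔽 n) (I : Set (SkewPoly 𝔽 n)) : Prop :=
  (0 : SkewPoly 𝔽 n) ∈ I ∧ (∀ F ∈ I, ∀ G ∈ I, F + G ∈ I) ∧ (∀ F ∈ I, -F ∈ I) ∧
    (∀ F ∈ I, ∀ G : SkewPoly 𝔽 n, S.mul G F ∈ I) ∧
    (∀ F ∈ I, ∀ G : SkewPoly 𝔽 n, S.mul F G ∈ I)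


/-- The left row-rank of the skew Vandermonde matrix `V_d(G)`: the dimension of the
left `𝔽`-span of its rows `(N_m(c))_{c ∈ G}`, indexed by the words `m` of length `< d`,
where `N_m(c)` is the evaluation of the monomial `m` at the point `c`. -/
noncomputable def vandermondeRank (S : RawMul 𝔽 n) (G : Finset (Fin n → 𝔽)) (d : ℕ) :
    Cardinal :=
  Module.rank 𝔽 ↥(Submodule.span 𝔽 (Set.range
    fun m : {m : FreeMonoid (Fin n) // FreeMonoid.length m < d} =>
      fun c : ↥G => eval S ↑c (Finsupp.single (m : FreeMonoid (Fin n)) (1 : 𝔽))))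

end SkewPoly

open SkewPoly

/-!
Evaluation at a point is left `𝔽`-linear: the commutation rule gives every `F` a remainder
modulo the left ideal of the point, and comparing top-degree coefficients shows that no nonzero
constant lies in that ideal. Hence `Im E_A ≅ R ⧸ I(A)` depends only on `I(A) = I(Ā)`, and for
`Ω = Ḡ₀` with `G₀` finite it embeds in `𝔽^{G₀}`. For `G ⊆ Ω`, restriction `𝔽^Ω → 𝔽^G` maps
`Im E_Ω` onto `Im E_G`, so equal finite dimensions make it injective; then `I(G) = I(Ω)` and
`Ḡ = Ω̄ = Ω`.
-/

universe v in
theorem LinearMap.ker_comp_eq_of_rank_range_comp_eq {K M : Type*} {V W : Type v} [DivisionRing K]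
    [AddCommGroup M] [Module K M] [AddCommGroup V] [Module K V] [AddCommGroup W] [Module K W]
    (E : M →ₗ[K] V) (r : V →ₗ[K] W) (hfin : Module.rank K (range E) < Cardinal.aleph0)
    (h : Module.rank K (range (r ∘ₗ E)) = Module.rank K (range E)) :
    ker (r ∘ₗ E) = ker E := by
  set f := r ∘ₗ (range E).subtype
  have hrange : range f = range (r ∘ₗ E) := by
    rw [range_comp, range_comp, Submodule.range_subtype]
  have hrn := f.rank_range_add_rank_ker
  rw [hrange, h] at hrn
  have hker : ker f = ⊥ :=
    Submodule.rank_eq_zero.1 (Cardinal.eq_of_add_eq_add_left (hrn.trans (add_zero _).symm) hfin)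
  refine le_antisymm (fun x hx => ?_) (ker_le_ker_comp E r)
  have hEx : (⟨E x, mem_range_self E x⟩ : range E) ∈ ker f := hx
  rw [hker, Submodule.mem_bot] at hEx
  exact congrArg Subtype.val hEx

namespace SkewPoly

variable {𝔽 : Type*} [DivisionRing 𝔽] {n : ℕ}

namespace RawMul

variable (S : RawMul 𝔽 n)

protected lemma mul_zero (F : SkewPoly 𝔽 n) : S.mul F 0 = 0 :=
  (AddMonoidHom.mk' (S.mul F) (S.mul_add F)).map_zero

protected lemma zero_mul (F : SkewPoly 𝔽 n) : S.mul 0 F = 0 :=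
  (AddMonoidHom.mk' (S.mul · F) (S.add_mul · · F)).map_zero

protected lemma mul_sub (F G H : SkewPoly 𝔽 n) : S.mul F (G - H) = S.mul F G - S.mul F H :=
  (AddMonoidHom.mk' (S.mul F) (S.mul_add F)).map_sub G H

protected lemma mul_sum {ι : Type*} (F : SkewPoly 𝔽 n) (s : Finset ι) (G : ι → SkewPoly 𝔽 n) :
    S.mul F (∑ i ∈ s, G i) = ∑ i ∈ s, S.mul F (G i) :=
  map_sum (AddMonoidHom.mk' (S.mul F) (S.mul_add F)) G s

protected lemma smul_mul (c : 𝔽) (F G : SkewPoly 𝔽 n) : S.mul (c • F) G = c • S.mul F G := by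
  rw [← S.const_mul, S.mul_assoc, S.const_mul]

lemma mul_single_one (F : SkewPoly 𝔽 n) (m : FreeMonoid (Fin n)) :
    S.mul F (single m 1) = mapDomain (· * m) F := by
  induction F using Finsupp.induction_linear with
  | zero => rw [S.zero_mul, mapDomain_zero]
  | add F G hF hG => rw [S.add_mul, hF, hG, mapDomain_add]
  | single m' c =>
    rw [← smul_single_one, S.smul_mul, S.mono_mul_mono, mapDomain_smul, mapDomain_single]

lemma mul_X_apply_mul_of (F : SkewPoly 𝔽 n) (i : Fin n) (m : FreeMonoid (Fin n)) :
    S.mul F (X 𝔽 i) (m * FreeMonoid.of i) = F m := by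
  rw [X, mul_single_one]
  exact mapDomain_apply (mul_left_injective _) F m

lemma mul_X_apply_mul_of_of_ne (F : SkewPoly 𝔽 n) {i j : Fin n} (hij : j ≠ i)
    (m : FreeMonoid (Fin n)) : S.mul F (X 𝔽 j) (m * FreeMonoid.of i) = 0 := by
  rw [X, mul_single_one]
  refine mapDomain_of_notMem_range _ _ ?_
  rintro ⟨m', hm'⟩
  have hlast := congrArg (fun w => (FreeMonoid.toList w).getLast?) hm'
  simp only [FreeMonoid.toList_mul, FreeMonoid.toList_of, List.getLast?_concat] at hlast
  exact hij (Option.some_injective _ hlast)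

lemma deg_mul_C_le (F : SkewPoly 𝔽 n) (a : 𝔽) : deg (S.mul F (C n a)) ≤ deg F := by
  rcases eq_or_ne a 0 with rfl | ha
  · rw [C, Finsupp.single_zero, S.mul_zero]
    exact bot_le
  rcases eq_or_ne F 0 with rfl | hF
  · rw [S.zero_mul]
  have hC : C n a ≠ 0 := single_ne_zero.2 ha
  have hdegC : deg (C n a) = 0 := by
    simp [deg, C, support_single _ ha]
  rw [S.deg_mul F (C n a) hF hC, hdegC, add_zero]

end RawMul

variable (S : RawMul 𝔽 n) {σ : 𝔽 → Matrix (Fin n) (Fin n) 𝔽} {δ : 𝔽 → Fin n → 𝔽}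

lemma length_le_deg {F : SkewPoly 𝔽 n} {m : FreeMonoid (Fin n)} (hm : m ∈ F.support) :
    (m.length : WithBot ℕ) ≤ deg F :=
  Finset.le_sup (f := fun m => (m.length : WithBot ℕ)) hm

/-- The top-degree coefficients of `Σⱼ Gⱼ (xⱼ - aⱼ)` are those of `Σⱼ Gⱼ xⱼ`: multiplying by
the constant `aⱼ` on the right does not raise the degree. -/
lemma sum_mul_X_sub_C_apply (a : Fin n → 𝔽) (G : Fin n → SkewPoly 𝔽 n) (i : Fin n)
    (m : FreeMonoid (Fin n)) (hG : ∀ j, ∀ m' ∈ (G j).support, m'.length ≤ m.length) :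
    (∑ j, S.mul (G j) (X 𝔽 j - C n (a j))) (m * FreeMonoid.of i) = G i m := by
  have hC : ∀ j, S.mul (G j) (C n (a j)) (m * FreeMonoid.of i) = 0 := by
    intro j
    by_contra hne
    have hlen := (length_le_deg (mem_support_iff.2 hne)).trans
      ((S.deg_mul_C_le _ _).trans (Finset.sup_le fun m' hm' => Nat.cast_le.2 (hG j m' hm')))
    simp only [FreeMonoid.length_mul, FreeMonoid.length_of, Nat.cast_le] at hlen
    omega
  simp only [finsetSum_apply, S.mul_sub, coe_sub, Pi.sub_apply, hC, sub_zero]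
  rw [Finset.sum_eq_single i (fun j _ hji => S.mul_X_apply_mul_of_of_ne _ hji m)
    (fun hi => absurd (Finset.mem_univ i) hi), S.mul_X_apply_mul_of]

lemma mul_mem_pointIdeal {a : Fin n → 𝔽} {F : SkewPoly 𝔽 n} (hF : F ∈ pointIdeal S a)
    (H : SkewPoly 𝔽 n) : S.mul H F ∈ pointIdeal S a := by
  obtain ⟨G, rfl⟩ := hF
  exact ⟨fun i => S.mul H (G i), by simp only [S.mul_sum, S.mul_assoc]⟩

/-- `pointIdeal S a` is closed under `c •` because `c • F = C c * F`. -/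
def pointSubmodule (a : Fin n → 𝔽) : Submodule 𝔽 (SkewPoly 𝔽 n) where
  carrier := pointIdeal S a
  zero_mem' := ⟨0, by simp only [Pi.zero_apply, S.zero_mul, Finset.sum_const_zero]⟩
  add_mem' := by
    rintro _ _ ⟨G, rfl⟩ ⟨G', rfl⟩
    exact ⟨G + G', by simp only [Pi.add_apply, S.add_mul, Finset.sum_add_distrib]⟩
  smul_mem' c F hF := by
    rw [← S.const_mul]
    exact mul_mem_pointIdeal S hF _

lemma decomposes_iff {a : Fin n → 𝔽} {F : SkewPoly 𝔽 n} {b : 𝔽} :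
    Decomposes S a F b ↔ F - C n b ∈ pointSubmodule S a := by
  simp only [Decomposes, ← sub_eq_iff_eq_add]
  rfl

lemma eq_zero_of_C_mem_pointSubmodule {a : Fin n → 𝔽} {b : 𝔽}
    (h : C n b ∈ pointSubmodule S a) : b = 0 := by
  obtain ⟨G, hG⟩ := h
  suffices hG0 : ∀ i, G i = 0 by
    simpa only [hG0, S.zero_mul, Finset.sum_const_zero, C, single_eq_zero] using hG
  by_contra! hne
  obtain ⟨i₀, hi₀⟩ := hne
  obtain ⟨⟨i, m⟩, hm, hmax⟩ := (Finset.univ.sigma fun i => (G i).support).exists_max_image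
    (fun p => p.2.length) ⟨⟨i₀, (support_nonempty_iff.2 hi₀).choose⟩,
      Finset.mem_sigma.2 ⟨Finset.mem_univ _, (support_nonempty_iff.2 hi₀).choose_spec⟩⟩
  have hcoeff := congrArg (· (m * FreeMonoid.of i)) hG
  rw [sum_mul_X_sub_C_apply S a G i m
    (fun j m' hm' => hmax ⟨j, m'⟩ (Finset.mem_sigma.2 ⟨Finset.mem_univ _, hm'⟩)), C,
    single_eq_of_ne (by simp [← FreeMonoid.length_eq_zero])] at hcoeff
  exact mem_support_iff.1 (Finset.mem_sigma.1 hm).2 hcoeff.symm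

lemma decomposes_unique {a : Fin n → 𝔽} {F : SkewPoly 𝔽 n} {b b' : 𝔽}
    (h : Decomposes S a F b) (h' : Decomposes S a F b') : b = b' := by
  rw [decomposes_iff] at h h'
  have hC : C n (b' - b) ∈ pointSubmodule S a := by
    simpa only [C, single_sub, sub_sub_sub_cancel_left] using sub_mem h h'
  exact (sub_eq_zero.1 (eq_zero_of_C_mem_pointSubmodule S hC)).symm

lemma decomposes_C (a : Fin n → 𝔽) (b : 𝔽) : Decomposes S a (C n b) b :=
  (decomposes_iff S).2 (by rw [sub_self]; exact zero_mem _)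

lemma decomposes_add {a : Fin n → 𝔽} {F F' : SkewPoly 𝔽 n} {b b' : 𝔽}
    (h : Decomposes S a F b) (h' : Decomposes S a F' b') :
    Decomposes S a (F + F') (b + b') := by
  rw [decomposes_iff] at *
  simpa only [C, Finsupp.single_add, add_sub_add_comm] using add_mem h h'

lemma decomposes_smul {a : Fin n → 𝔽} {F : SkewPoly 𝔽 n} {b : 𝔽} (c : 𝔽)
    (h : Decomposes S a F b) : Decomposes S a (c • F) (c * b) := by
  rw [decomposes_iff] at *
  simpa only [smul_sub, C, Finsupp.smul_single, smul_eq_mul] using Submodule.smul_mem _ c h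

/-- From `xᵢ b = Σⱼ σ_{i,j}(b) (xⱼ - aⱼ) + (Σⱼ σ_{i,j}(b) aⱼ + δᵢ(b))`. -/
lemma decomposes_X_mul (hS : HasCommRule S σ δ) {a : Fin n → 𝔽} {F : SkewPoly 𝔽 n} {b : 𝔽}
    (h : Decomposes S a F b) (i : Fin n) :
    Decomposes S a (S.mul (X 𝔽 i) F) (∑ j, σ b i j * a j + δ b i) := by
  rw [decomposes_iff] at *
  have hXb : S.mul (X 𝔽 i) (C n b) - C n (∑ j, σ b i j * a j + δ b i)
      = ∑ j, S.mul (C n (σ b i j)) (X 𝔽 j - C n (a j)) := by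
    simp only [hS i b, S.const_mul, smul_sub]
    simp only [X, C, Finsupp.smul_single, smul_eq_mul, mul_one, Finsupp.single_add,
      single_finsetSum, Finset.sum_sub_distrib]
    abel
  have hsplit : S.mul (X 𝔽 i) F - C n (∑ j, σ b i j * a j + δ b i)
      = S.mul (X 𝔽 i) (F - C n b) +
          (S.mul (X 𝔽 i) (C n b) - C n (∑ j, σ b i j * a j + δ b i)) := by
    rw [S.mul_sub]
    abel
  rw [hsplit, hXb]
  exact add_mem (mul_mem_pointIdeal S h _) ⟨fun j => C n (σ b i j), rfl⟩

lemma exists_decomposes (hS : HasCommRule S σ δ) (a : Fin n → 𝔽) (F : SkewPoly 𝔽 n) :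
    ∃ b, Decomposes S a F b := by
  have hmono : ∀ m : FreeMonoid (Fin n), ∃ b, Decomposes S a (single m 1) b := by
    intro m
    induction m using FreeMonoid.recOn with
    | one => exact ⟨1, decomposes_C S a 1⟩
    | of_mul i m ih =>
      obtain ⟨b, hb⟩ := ih
      rw [← S.mono_mul_mono]
      exact ⟨_, decomposes_X_mul S hS hb i⟩
  induction F using Finsupp.induction_linear with
  | zero => exact ⟨0, by simpa only [C, Finsupp.single_zero] using decomposes_C S a 0⟩
  | add F F' hF hF' =>
    obtain ⟨b, hb⟩ := hF
    obtain ⟨b', hb'⟩ := hF'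
    exact ⟨_, decomposes_add S hb hb'⟩
  | single m c =>
    obtain ⟨b, hb⟩ := hmono m
    rw [← smul_single_one]
    exact ⟨_, decomposes_smul S c hb⟩

lemma eval_eq_of_decomposes {a : Fin n → 𝔽} {F : SkewPoly 𝔽 n} {b : 𝔽}
    (h : Decomposes S a F b) : eval S a F = b := by
  rw [eval, dif_pos ⟨b, h⟩]
  exact decomposes_unique S (Exists.choose_spec _) h

lemma decomposes_eval (hS : HasCommRule S σ δ) (a : Fin n → 𝔽) (F : SkewPoly 𝔽 n) :
    Decomposes S a F (eval S a F) := by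
  obtain ⟨b, hb⟩ := exists_decomposes S hS a F
  rwa [eval_eq_of_decomposes S hb]

noncomputable def evalMap (hS : HasCommRule S σ δ) (A : Set (Fin n → 𝔽)) :
    SkewPoly 𝔽 n →ₗ[𝔽] (A → 𝔽) where
  toFun F a := eval S a F
  map_add' F F' := funext fun a => eval_eq_of_decomposes S
    (decomposes_add S (decomposes_eval S hS a F) (decomposes_eval S hS a F'))
  map_smul' c F := funext fun a =>
    eval_eq_of_decomposes S (decomposes_smul S c (decomposes_eval S hS a F))

lemma zeroIdeal_pClosure (A : Set (Fin n → 𝔽)) : zeroIdeal S (pClosure S A) = zeroIdeal S A :=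
  Set.Subset.antisymm (fun _ hF a ha => hF a fun _ hF' => hF' a ha) fun _ hF _ ha => ha _ hF

lemma evalSpan_eq_range (hS : HasCommRule S σ δ) (A : Set (Fin n → 𝔽)) :
    evalSpan S A = LinearMap.range (evalMap S hS A) :=
  Submodule.span_eq (LinearMap.range (evalMap S hS A))

lemma mem_ker_evalMap (hS : HasCommRule S σ δ) {A : Set (Fin n → 𝔽)} {F : SkewPoly 𝔽 n} :
    F ∈ LinearMap.ker (evalMap S hS A) ↔ F ∈ zeroIdeal S A := by
  simp [LinearMap.mem_ker, funext_iff, evalMap, zeroIdeal]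

lemma ker_evalMap_eq_iff (hS : HasCommRule S σ δ) {A B : Set (Fin n → 𝔽)} :
    LinearMap.ker (evalMap S hS A) = LinearMap.ker (evalMap S hS B) ↔
      zeroIdeal S A = zeroIdeal S B := by
  simp only [SetLike.ext_iff, Set.ext_iff, mem_ker_evalMap]

lemma rank_evalSpan_eq_of_zeroIdeal_eq (hS : HasCommRule S σ δ) {A B : Set (Fin n → 𝔽)}
    (h : zeroIdeal S A = zeroIdeal S B) :
    Module.rank 𝔽 (evalSpan S A) = Module.rank 𝔽 (evalSpan S B) := by
  rw [evalSpan_eq_range S hS, evalSpan_eq_range S hS,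
    ← (evalMap S hS A).quotKerEquivRange.rank_eq, ← (evalMap S hS B).quotKerEquivRange.rank_eq,
    (ker_evalMap_eq_iff S hS).2 h]

lemma rank_evalSpan_lt_aleph0 (hS : HasCommRule S σ δ) {A : Set (Fin n → 𝔽)} (hA : FinGen S A) :
    Module.rank 𝔽 (evalSpan S A) < Cardinal.aleph0 := by
  obtain ⟨A₀, hA₀, -, rfl⟩ := hA
  have := hA₀.to_subtype
  rw [rank_evalSpan_eq_of_zeroIdeal_eq S hS (zeroIdeal_pClosure S A₀)]
  exact (Submodule.rank_le _).trans_lt (Module.rank_lt_aleph0 𝔽 (A₀ → 𝔽))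

lemma zeroIdeal_eq_of_rank_evalSpan_eq (hS : HasCommRule S σ δ) {G Ω : Set (Fin n → 𝔽)}
    (hG : G ⊆ Ω)
    (hfin : Module.rank 𝔽 (evalSpan S Ω) < Cardinal.aleph0)
    (h : Module.rank 𝔽 (evalSpan S Ω) = Module.rank 𝔽 (evalSpan S G)) :
    zeroIdeal S G = zeroIdeal S Ω := by
  have hcomp : LinearMap.funLeft 𝔽 𝔽 (Set.inclusion hG) ∘ₗ evalMap S hS Ω = evalMap S hS G := rfl
  rw [evalSpan_eq_range S hS] at hfin
  rw [evalSpan_eq_range S hS, evalSpan_eq_range S hS] at h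
  have hker := LinearMap.ker_comp_eq_of_rank_range_comp_eq (evalMap S hS Ω)
    (LinearMap.funLeft 𝔽 𝔽 (Set.inclusion hG)) hfin (by rw [hcomp, h])
  rwa [hcomp, ker_evalMap_eq_iff] at hker

end SkewPoly

theorem stmt15_general {𝔽 : Type*} [DivisionRing 𝔽] {n : ℕ}
    (σ : 𝔽 → Matrix (Fin n) (Fin n) 𝔽) (δ : 𝔽 → Fin n → 𝔽)
    (S : RawMul 𝔽 n) (hS : HasCommRule S σ δ)
    (Ω G : Set (Fin n → 𝔽)) (hΩ : IsPClosed S Ω) (hfg : FinGen S Ω) (hG : G ⊆ Ω) :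
    Module.rank 𝔽 ↥(evalSpan S Ω) < Cardinal.aleph0 ∧
    (pClosure S G = Ω ↔
      Module.rank 𝔽 ↥(evalSpan S Ω) = Module.rank 𝔽 ↥(evalSpan S G)) := by
  have hfin := rank_evalSpan_lt_aleph0 S hS hfg
  refine ⟨hfin, fun h => rank_evalSpan_eq_of_zeroIdeal_eq S hS ?_, fun h => ?_⟩
  · rw [← h, zeroIdeal_pClosure]
  · calc pClosure S G = pClosure S Ω := by
          simp only [pClosure, zeroIdeal_eq_of_rank_evalSpan_eq S hS hG hfin h]
      _ = Ω := hΩ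

/-- For `G ⊆ Ω` with `Ω` finitely generated and P-closed: `Ω = Ḡ` iff
the images of the evaluation maps `E_Ω` and `E_G` have the same (finite) dimension. -/
theorem stmt15 {𝔽 : Type*} [DivisionRing 𝔽] {n : ℕ} (hn : 0 < n)
    (σ : 𝔽 → Matrix (Fin n) (Fin n) 𝔽) (δ : 𝔽 → Fin n → 𝔽)
    (hσ : IsMatrixMorphism σ) (hδ : IsVectorDerivation σ δ)
    (S : RawMul 𝔽 n) (hS : HasCommRule S σ δ)
    (Ω G : Set (Fin n → 𝔽)) (hΩ : IsPClosed S Ω) (hfg : FinGen S Ω) (hG : G ⊆ Ω) :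
    Module.rank 𝔽 ↥(evalSpan S Ω) < Cardinal.aleph0 ∧
    (pClosure S G = Ω ↔
      Module.rank 𝔽 ↥(evalSpan S Ω) = Module.rank 𝔽 ↥(evalSpan S G)) :=
  stmt15_general σ δ S hS Ω G hΩ hfg hG
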